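/- arXiv:2511.02535 — 2 statements merged into one kernel-verified Lean document; each statement's English description precedes it below -/
import Mathlib

section
/- Let F₀, F₁ be smooth vector fields on ℝⁿ vanishing at p, with ∇F₀⁽¹⁾(p), ∇F₁⁽¹⁾(p) ∈ Span(e₁). Then for every iterated Lie bracket F built only from F₀ and F₁, the gradient of its first component at p lies in Span(e₁), i.e., ∂ᵢ F⁽¹⁾(p) = 0 for all i ∈ {2,…,n}. -/
/-- Pointwise Lie bracket: `[f,g](x) = Dg(x) f(x) − Df(x) g(x)`. -/
noncomputable def lieBracket {n : ℕ} (f g : (Fin n → ℝ) → (Fin n → ℝ)) :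
    (Fin n → ℝ) → (Fin n → ℝ) :=
  fun x => fderiv ℝ g x (f x) - fderiv ℝ f x (g x)

/-- Partial derivative ∂ᵢ of the first component of a vector field, at a point. -/
noncomputable def dFirst {n : ℕ} (f : (Fin (n+1) → ℝ) → (Fin (n+1) → ℝ))
    (p : Fin (n+1) → ℝ) (i : Fin (n+1)) : ℝ :=
  fderiv ℝ (fun x => f x 0) p (Pi.single i 1)

/-- Formal iterated Lie brackets of two vector fields. -/
inductive Br2 : Type
  | f0 : Br2
  | f1 : Br2
  | node : Br2 → Br2 → Br2

/-- Evaluation of a formal bracket to an actual vector field. -/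
noncomputable def Br2.eval {n : ℕ} (F0 F1 : (Fin n → ℝ) → (Fin n → ℝ)) :
    Br2 → ((Fin n → ℝ) → (Fin n → ℝ))
  | Br2.f0 => F0
  | Br2.f1 => F1
  | Br2.node g h => lieBracket (Br2.eval F0 F1 g) (Br2.eval F0 F1 h)

lemma lin_zero {n : ℕ} (L : (Fin (n+1) → ℝ) →L[ℝ] ℝ) (w : Fin (n+1) → ℝ)
    (hL : ∀ j : Fin (n+1), j ≠ 0 → L (Pi.single j 1) = 0) (hw : w 0 = 0) : L w = 0 := by
  have hrep : w = ∑ j : Fin (n+1), w j • (Pi.single j 1 : Fin (n+1) → ℝ) := by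
    funext k
    simp [Pi.single_apply, Finset.sum_apply]
  rw [hrep, map_sum]
  apply Finset.sum_eq_zero
  intro j _
  rcases eq_or_ne j 0 with rfl | hj
  · simp [hw]
  · simp [hL j hj]

lemma lie_smooth {n : ℕ} (f g : (Fin n → ℝ) → (Fin n → ℝ))
    (hf : ContDiff ℝ (⊤ : ℕ∞) f) (hg : ContDiff ℝ (⊤ : ℕ∞) g) : ContDiff ℝ (⊤ : ℕ∞) (lieBracket f g) := by
  have hf' : ContDiff ℝ (⊤ : ℕ∞) (fderiv ℝ f) := hf.fderiv_right (by simp)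
  have hg' : ContDiff ℝ (⊤ : ℕ∞) (fderiv ℝ g) := hg.fderiv_right (by simp)
  exact (hg'.clm_apply hf).sub (hf'.clm_apply hg)

lemma dFirst_eq {n : ℕ} (f : (Fin (n+1) → ℝ) → (Fin (n+1) → ℝ)) (hf : ContDiff ℝ (⊤ : ℕ∞) f)
    (p : Fin (n+1) → ℝ) (j : Fin (n+1)) :
    dFirst f p j = fderiv ℝ f p (Pi.single j 1) 0 := by
  have h : HasFDerivAt (fun x => f x 0)
      ((ContinuousLinearMap.proj 0).comp (fderiv ℝ f p)) p :=
    (ContinuousLinearMap.proj (R := ℝ) (φ := fun _ : Fin (n+1) => ℝ) 0).hasFDerivAt.comp p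
      (hf.differentiable (by simp) p).hasFDerivAt
  rw [dFirst, h.fderiv]
  rfl

lemma key {n : ℕ} (f g : (Fin (n+1) → ℝ) → (Fin (n+1) → ℝ))
    (hf : ContDiff ℝ (⊤ : ℕ∞) f) (hg : ContDiff ℝ (⊤ : ℕ∞) g) (p : Fin (n+1) → ℝ)
    (hfp : f p = 0) (hgp : g p = 0)
    (hfd : ∀ i : Fin (n+1), i ≠ 0 → dFirst f p i = 0)
    (hgd : ∀ i : Fin (n+1), i ≠ 0 → dFirst g p i = 0) :
    ∀ i : Fin (n+1), i ≠ 0 → dFirst (lieBracket f g) p i = 0 := by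
  intro i hi
  have hdf : HasFDerivAt f (fderiv ℝ f p) p := (hf.differentiable (by simp) p).hasFDerivAt
  have hdg : HasFDerivAt g (fderiv ℝ g p) p := (hg.differentiable (by simp) p).hasFDerivAt
  have hdf' : HasFDerivAt (fderiv ℝ f) (fderiv ℝ (fderiv ℝ f) p) p :=
    (((hf.fderiv_right (m := (⊤ : ℕ∞)) (by simp)).differentiable (by simp)) p).hasFDerivAt
  have hdg' : HasFDerivAt (fderiv ℝ g) (fderiv ℝ (fderiv ℝ g) p) p :=
    (((hg.fderiv_right (m := (⊤ : ℕ∞)) (by simp)).differentiable (by simp)) p).hasFDerivAt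
  have h1 : HasFDerivAt (fun x => fderiv ℝ g x (f x))
      ((fderiv ℝ g p).comp (fderiv ℝ f p) + (fderiv ℝ (fderiv ℝ g) p).flip (f p)) p :=
    hdg'.clm_apply hdf
  have h2 : HasFDerivAt (fun x => fderiv ℝ f x (g x))
      ((fderiv ℝ f p).comp (fderiv ℝ g p) + (fderiv ℝ (fderiv ℝ f) p).flip (g p)) p :=
    hdf'.clm_apply hdg
  have h3 : HasFDerivAt (fun x => lieBracket f g x 0)
      ((ContinuousLinearMap.proj 0).comp
        (((fderiv ℝ g p).comp (fderiv ℝ f p) + (fderiv ℝ (fderiv ℝ g) p).flip (f p)) -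
         ((fderiv ℝ f p).comp (fderiv ℝ g p) + (fderiv ℝ (fderiv ℝ f) p).flip (g p)))) p := by
    exact (ContinuousLinearMap.proj (R := ℝ) (φ := fun _ : Fin (n+1) => ℝ) 0).hasFDerivAt.comp p
      (h1.sub h2)
  have h4 : dFirst (lieBracket f g) p i =
      (fderiv ℝ g p (fderiv ℝ f p (Pi.single i 1))) 0
      - (fderiv ℝ f p (fderiv ℝ g p (Pi.single i 1))) 0 := by
    rw [dFirst, h3.fderiv]
    simp [hfp, hgp]
  rw [h4]
  have t1 : (fderiv ℝ g p (fderiv ℝ f p (Pi.single i 1))) 0 = 0 := by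
    have := lin_zero ((ContinuousLinearMap.proj (R := ℝ) (φ := fun _ : Fin (n+1) => ℝ) 0).comp
      (fderiv ℝ g p)) (fderiv ℝ f p (Pi.single i 1))
      (fun j hj => by
        have := hgd j hj
        rw [dFirst_eq g hg p j] at this
        simpa using this)
      (by have := hfd i hi; rw [dFirst_eq f hf p i] at this; exact this)
    simpa using this
  have t2 : (fderiv ℝ f p (fderiv ℝ g p (Pi.single i 1))) 0 = 0 := by
    have := lin_zero ((ContinuousLinearMap.proj (R := ℝ) (φ := fun _ : Fin (n+1) => ℝ) 0).comp
      (fderiv ℝ f p)) (fderiv ℝ g p (Pi.single i 1))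
      (fun j hj => by
        have := hfd j hj
        rw [dFirst_eq f hf p j] at this
        simpa using this)
      (by have := hgd i hi; rw [dFirst_eq g hg p i] at this; exact this)
    simpa using this
  rw [t1, t2, sub_zero]

theorem stmt3 {n : ℕ} (F0 F1 : (Fin (n+1) → ℝ) → (Fin (n+1) → ℝ))
    (hF0 : ContDiff ℝ (⊤ : ℕ∞) F0) (hF1 : ContDiff ℝ (⊤ : ℕ∞) F1) (p : Fin (n+1) → ℝ)
    (hF0p : F0 p = 0) (hF1p : F1 p = 0)
    (hF0grad : ∀ i : Fin (n+1), i ≠ 0 → dFirst F0 p i = 0)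
    (hF1grad : ∀ i : Fin (n+1), i ≠ 0 → dFirst F1 p i = 0) :
    ∀ (B : Br2) (i : Fin (n+1)), i ≠ 0 → dFirst (B.eval F0 F1) p i = 0 := by
  have main : ∀ B : Br2, ContDiff ℝ (⊤ : ℕ∞) (B.eval F0 F1) ∧ (B.eval F0 F1) p = 0 ∧
      ∀ i : Fin (n+1), i ≠ 0 → dFirst (B.eval F0 F1) p i = 0 := by
    intro B
    induction B with
    | f0 => exact ⟨hF0, hF0p, hF0grad⟩
    | f1 => exact ⟨hF1, hF1p, hF1grad⟩
    | node g h ihg ihh =>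
      obtain ⟨hgs, hgp, hgd⟩ := ihg
      obtain ⟨hhs, hhp, hhd⟩ := ihh
      refine ⟨lie_smooth _ _ hgs hhs, ?_, key _ _ hgs hhs p hgp hhp hgd hhd⟩
      simp [Br2.eval, lieBracket, hgp, hhp]
  exact fun B => (main B).2.2
end

section
/- Let F₀, F₁, F₂ be smooth vector fields on ℝⁿ with F₀(p) = F₁(p) = 0, ∇F₀⁽¹⁾(p), ∇F₁⁽¹⁾(p) ∈ Span(e₁), and F₂⁽¹⁾(p) = 0. Then every iterated Lie bracket of F₀, F₁, F₂ containing exactly one occurrence of F₂ has vanishing first component at p. -/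
/-- Formal iterated Lie brackets of three vector fields. -/
inductive Br3 : Type
  | f0 : Br3
  | f1 : Br3
  | f2 : Br3
  | node : Br3 → Br3 → Br3

/-- Number of leaves labeled `f2`. -/
def Br3.countF2 : Br3 → ℕ
  | Br3.f0 => 0
  | Br3.f1 => 0
  | Br3.f2 => 1
  | Br3.node g h => Br3.countF2 g + Br3.countF2 h

/-- Evaluation of a formal bracket to an actual vector field. -/
noncomputable def Br3.eval {n : ℕ} (F0 F1 F2 : (Fin n → ℝ) → (Fin n → ℝ)) :
    Br3 → ((Fin n → ℝ) → (Fin n → ℝ))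
  | Br3.f0 => F0
  | Br3.f1 => F1
  | Br3.f2 => F2
  | Br3.node g h => lieBracket (Br3.eval F0 F1 F2 g) (Br3.eval F0 F1 F2 h)

namespace Stmt5Aux

variable {m : ℕ}

lemma fderiv_coord (h : (Fin m → ℝ) → (Fin m → ℝ)) (p : Fin m → ℝ)
    (hd : DifferentiableAt ℝ h p) (i : Fin m) :
    fderiv ℝ (fun x => h x i) p =
      (ContinuousLinearMap.proj i : (Fin m → ℝ) →L[ℝ] ℝ).comp (fderiv ℝ h p) :=
  (((ContinuousLinearMap.proj i : (Fin m → ℝ) →L[ℝ] ℝ).hasFDerivAt).comp p hd.hasFDerivAt).fderiv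

lemma apply_zero_of_grad (g : (Fin (m+1) → ℝ) → (Fin (m+1) → ℝ)) (p : Fin (m+1) → ℝ)
    (hgrad : ∀ i : Fin (m+1), i ≠ 0 → fderiv ℝ (fun x => g x 0) p (Pi.single i 1) = 0)
    (w : Fin (m+1) → ℝ) (hw : w 0 = 0) :
    fderiv ℝ (fun x => g x 0) p w = 0 := by
  set L := fderiv ℝ (fun x => g x 0) p
  have hwsum : w = ∑ i, w i • (Pi.single i 1 : Fin (m+1) → ℝ) := by
    funext j
    simp [Finset.sum_apply, Pi.single_apply]
  rw [hwsum, map_sum]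
  refine Finset.sum_eq_zero fun i _ => ?_
  by_cases hi : i = 0
  · subst hi; simp [map_smul, hw]
  · simp [map_smul, hgrad i hi]

lemma lieBracket_contDiff (f g : (Fin m → ℝ) → (Fin m → ℝ))
    (hf : ContDiff ℝ (⊤ : ℕ∞) f) (hg : ContDiff ℝ (⊤ : ℕ∞) g) :
    ContDiff ℝ (⊤ : ℕ∞) (lieBracket f g) :=
  ((hg.fderiv_right (by simp)).clm_apply hf).sub ((hf.fderiv_right (by simp)).clm_apply hg)

/-- derivative of `x ↦ (Df(x) (g x))ᵢ` at a point where `g` vanishes -/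
lemma key (f g : (Fin m → ℝ) → (Fin m → ℝ)) (p : Fin m → ℝ)
    (hf : ContDiff ℝ (⊤ : ℕ∞) f) (hg : ContDiff ℝ (⊤ : ℕ∞) g) (hg0 : g p = 0) (i : Fin m) (v : Fin m → ℝ) :
    fderiv ℝ (fun x => fderiv ℝ f x (g x) i) p v =
      fderiv ℝ (fun x => f x i) p (fderiv ℝ g p v) := by
  set F : (Fin m → ℝ) → (Fin m → ℝ) := fun x => fderiv ℝ f x (g x) with hF
  have hFsm : ContDiff ℝ (⊤ : ℕ∞) F := (hf.fderiv_right (by simp)).clm_apply hg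
  have hFd : DifferentiableAt ℝ F p := hFsm.differentiable (by simp) p
  have h1 : fderiv ℝ (fun x => F x i) p v = (fderiv ℝ F p v) i := by
    rw [fderiv_coord F p hFd i]; rfl
  have h2 : fderiv ℝ F p = (fderiv ℝ f p).comp (fderiv ℝ g p) := by
    rw [hF, fderiv_clm_apply ((hf.fderiv_right (by simp) : ContDiff ℝ (⊤ : ℕ∞) (fderiv ℝ f)).differentiable (by simp) p)
      (hg.differentiable (by simp) p)]
    ext w
    simp [hg0]
  have h3 : fderiv ℝ (fun x => f x i) p (fderiv ℝ g p v) =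
      (fderiv ℝ f p (fderiv ℝ g p v)) i := by
    rw [fderiv_coord f p (hf.differentiable (by simp) p) i]; rfl
  rw [h1, h2, h3]; rfl

end Stmt5Aux

theorem stmt5 {n : ℕ} (F0 F1 F2 : (Fin (n+1) → ℝ) → (Fin (n+1) → ℝ))
    (hF0 : ContDiff ℝ (⊤ : ℕ∞) F0) (hF1 : ContDiff ℝ (⊤ : ℕ∞) F1) (hF2 : ContDiff ℝ (⊤ : ℕ∞) F2)
    (p : Fin (n+1) → ℝ) (hF0p : F0 p = 0) (hF1p : F1 p = 0)
    (hF0grad : ∀ i : Fin (n+1), i ≠ 0 →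
      fderiv ℝ (fun x => F0 x 0) p (Pi.single i 1) = 0)
    (hF1grad : ∀ i : Fin (n+1), i ≠ 0 →
      fderiv ℝ (fun x => F1 x 0) p (Pi.single i 1) = 0)
    (hF21 : F2 p 0 = 0) :
    ∀ B : Br3, B.countF2 = 1 → B.eval F0 F1 F2 p 0 = 0 := by
  open Stmt5Aux in
  -- smoothness of all evaluations
  have hsm : ∀ B : Br3, ContDiff ℝ (⊤ : ℕ∞) (B.eval F0 F1 F2) := by
    intro B
    induction B with
    | f0 => exact hF0
    | f1 => exact hF1
    | f2 => exact hF2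
    | node g h ihg ihh => exact lieBracket_contDiff _ _ ihg ihh
  -- brackets without F2 vanish at p
  have hzero : ∀ B : Br3, B.countF2 = 0 → B.eval F0 F1 F2 p = 0 := by
    intro B
    induction B with
    | f0 => intro _; exact hF0p
    | f1 => intro _; exact hF1p
    | f2 => intro hc; simp [Br3.countF2] at hc
    | node g h ihg ihh =>
      intro hc
      simp only [Br3.countF2, Nat.add_eq_zero] at hc
      simp [Br3.eval, lieBracket, ihg hc.1, ihh hc.2]
  -- brackets without F2 have vanishing transverse gradient of first component
  have hgrad : ∀ B : Br3, B.countF2 = 0 → ∀ i : Fin (n+1), i ≠ 0 →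
      fderiv ℝ (fun x => B.eval F0 F1 F2 x 0) p (Pi.single i 1) = 0 := by
    intro B
    induction B with
    | f0 => intro _; exact hF0grad
    | f1 => intro _; exact hF1grad
    | f2 => intro hc; simp [Br3.countF2] at hc
    | node g h ihg ihh =>
      intro hc i hi
      simp only [Br3.countF2, Nat.add_eq_zero] at hc
      set g' := g.eval F0 F1 F2 with hg'
      set h' := h.eval F0 F1 F2 with hh'
      have hgs := hsm g
      have hhs := hsm h
      have hA : DifferentiableAt ℝ (fun x => fderiv ℝ h' x (g' x) 0) p :=
        ((ContinuousLinearMap.proj (0 : Fin (n+1)) :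
          (Fin (n+1) → ℝ) →L[ℝ] ℝ).differentiableAt).comp p
          (((hhs.fderiv_right (by simp)).clm_apply hgs).differentiable (by simp) p)
      have hB : DifferentiableAt ℝ (fun x => fderiv ℝ g' x (h' x) 0) p :=
        ((ContinuousLinearMap.proj (0 : Fin (n+1)) :
          (Fin (n+1) → ℝ) →L[ℝ] ℝ).differentiableAt).comp p
          (((hgs.fderiv_right (by simp)).clm_apply hhs).differentiable (by simp) p)
      have heq : (fun x => Br3.eval F0 F1 F2 (g.node h) x 0) =
          fun x => fderiv ℝ h' x (g' x) 0 - fderiv ℝ g' x (h' x) 0 := rfl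
      rw [heq, fderiv_fun_sub hA hB, ContinuousLinearMap.sub_apply]
      have hwg0 : (fderiv ℝ g' p (Pi.single i 1)) 0 = 0 := by
        have h2 := ihg hc.1 i hi
        rw [fderiv_coord g' p (hgs.differentiable (by simp) p) 0] at h2
        exact h2
      have hwh0 : (fderiv ℝ h' p (Pi.single i 1)) 0 = 0 := by
        have h2 := ihh hc.2 i hi
        rw [fderiv_coord h' p (hhs.differentiable (by simp) p) 0] at h2
        exact h2
      rw [Stmt5Aux.key h' g' p hhs hgs (hzero g hc.1) 0 (Pi.single i 1),
        Stmt5Aux.key g' h' p hgs hhs (hzero h hc.2) 0 (Pi.single i 1),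
        Stmt5Aux.apply_zero_of_grad h' p (ihh hc.2) _ hwg0,
        Stmt5Aux.apply_zero_of_grad g' p (ihg hc.1) _ hwh0, sub_zero]
  -- main induction: exactly one F2
  intro B
  induction B with
  | f0 => intro hc; simp [Br3.countF2] at hc
  | f1 => intro hc; simp [Br3.countF2] at hc
  | f2 => intro _; exact hF21
  | node g h ihg ihh =>
    intro hc
    simp only [Br3.countF2] at hc
    set g' := g.eval F0 F1 F2 with hg'
    set h' := h.eval F0 F1 F2 with hh'
    have hgs := hsm g
    have hhs := hsm h
    have heq : Br3.eval F0 F1 F2 (g.node h) p 0 =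
        fderiv ℝ h' p (g' p) 0 - fderiv ℝ g' p (h' p) 0 := rfl
    rw [heq]
    have hcase : (g.countF2 = 1 ∧ h.countF2 = 0) ∨ (g.countF2 = 0 ∧ h.countF2 = 1) := by omega
    have e1 : (fderiv ℝ h' p (g' p)) 0 = fderiv ℝ (fun x => h' x 0) p (g' p) := by
      rw [fderiv_coord h' p (hhs.differentiable (by simp) p) 0]; rfl
    have e2 : (fderiv ℝ g' p (h' p)) 0 = fderiv ℝ (fun x => g' x 0) p (h' p) := by
      rw [fderiv_coord g' p (hgs.differentiable (by simp) p) 0]; rfl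
    rcases hcase with ⟨hc1, hc2⟩ | ⟨hc1, hc2⟩
    · have hhp : h' p = 0 := hzero h hc2
      rw [hhp, map_zero, e1,
        Stmt5Aux.apply_zero_of_grad h' p (hgrad h hc2) (g' p) (ihg hc1)]
      simp
    · have hgp : g' p = 0 := hzero g hc1
      rw [hgp, map_zero, e2,
        Stmt5Aux.apply_zero_of_grad g' p (hgrad g hc1) (h' p) (ihh hc2)]
      simp
end
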